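/- Let (q_τ)_{τ=0}^{t-1} be nonnegative reals with q_0 = 0 and |q_{τ+1} - q_τ| ≤ C for all τ (C > 0). Let (x_τ)_{τ=0}^{t-1} be {0,1}-valued with e = ∑_τ x_τ, and let h = ⌈z·e⌉ for some z > 0. Then ∑_{τ=0}^{t-1} q_τ x_τ ≤ (1/z)·∑_{τ=0}^{t-1} q_τ + C·z·e² + C·e. -/

import Mathlib

theorem decoupling_queue_indicator (t : ℕ) (q x : ℕ → ℝ) (C z : ℝ)
    (hq0 : q 0 = 0) (hqnn : ∀ τ, 0 ≤ q τ)
    (hC : 0 < C) (hstep : ∀ τ, |q (τ + 1) - q τ| ≤ C)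
    (hx : ∀ τ, x τ = 0 ∨ x τ = 1) (hz : 0 < z) :
    ∑ τ ∈ Finset.range t, q τ * x τ ≤
      (1 / z) * ∑ τ ∈ Finset.range t, q τ +
        C * z * (∑ τ ∈ Finset.range t, x τ) ^ 2 +
        C * (∑ τ ∈ Finset.range t, x τ) := by
  have hxnn : ∀ τ, 0 ≤ x τ := fun τ => by rcases hx τ with h | h <;> simp [h]
  have hqsum : 0 ≤ ∑ τ ∈ Finset.range t, q τ :=
    Finset.sum_nonneg fun τ _ => hqnn τ
  set e : ℝ := ∑ τ ∈ Finset.range t, x τ with he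
  have henn : 0 ≤ e := Finset.sum_nonneg fun τ _ => hxnn τ
  rcases eq_or_lt_of_le henn with he0 | hepos
  · -- e = 0 : all x vanish
    have hx0 : ∀ τ ∈ Finset.range t, x τ = 0 :=
      (Finset.sum_eq_zero_iff_of_nonneg (fun τ _ => hxnn τ)).1 he0.symm
    have hL : ∑ τ ∈ Finset.range t, q τ * x τ = 0 :=
      Finset.sum_eq_zero fun τ hτ => by rw [hx0 τ hτ, mul_zero]
    have h1 : (0:ℝ) ≤ (1 / z) * ∑ τ ∈ Finset.range t, q τ :=
      mul_nonneg (by positivity) hqsum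
    rw [hL, ← he0]
    nlinarith [hC.le]
  · -- e > 0
    have hze : 0 < z * e := mul_pos hz hepos
    set h : ℕ := ⌈z * e⌉₊ with hhdef
    have hhge : z * e ≤ (h : ℝ) := Nat.le_ceil _
    have hhlt : (h : ℝ) < z * e + 1 := Nat.ceil_lt_add_one hze.le
    have hhpos : (0:ℝ) < (h : ℝ) := lt_of_lt_of_le hze hhge
    -- one-step decrement bound
    have hdec : ∀ n, q n ≤ q (n - 1) + C := by
      intro n
      cases n with
      | zero => simpa using hC.le
      | succ m =>
        have := (abs_le.1 (hstep m)).2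
        simpa using by linarith
    -- multi-step bound with truncated subtraction
    have hA : ∀ a b : ℕ, q a ≤ q (a - b) + C * b := by
      intro a b
      induction b with
      | zero => simp
      | succ b ih =>
        have h2 := hdec (a - b)
        have h3 : a - (b + 1) = (a - b) - 1 := by omega
        rw [h3]
        push_cast
        linarith
    set S : ℕ → ℝ := fun τ => ∑ j ∈ Finset.range h, q (τ - j) with hSdef
    have hSnn : ∀ τ, 0 ≤ S τ := fun τ => Finset.sum_nonneg fun j _ => hqnn _
    -- window sum bounded by total sum
    have hB : ∀ τ ∈ Finset.range t, S τ ≤ ∑ σ ∈ Finset.range t, q σ := by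
      intro τ hτ
      have hτt : τ < t := Finset.mem_range.1 hτ
      have hsplit : S τ = ∑ j ∈ (Finset.range h).filter (fun j => j ≤ τ), q (τ - j) := by
        show (∑ j ∈ Finset.range h, q (τ - j)) = _
        rw [← Finset.sum_filter_add_sum_filter_not (Finset.range h) (fun j => j ≤ τ)]
        have hz0 : ∑ j ∈ (Finset.range h).filter (fun j => ¬ j ≤ τ), q (τ - j) = 0 :=
          Finset.sum_eq_zero fun j hj => by
            simp only [Finset.mem_filter] at hj
            have : τ - j = 0 := by omega
            rw [this, hq0]
        rw [hz0, add_zero]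
      have hinj : ∀ a ∈ (Finset.range h).filter (fun j => j ≤ τ),
          ∀ b ∈ (Finset.range h).filter (fun j => j ≤ τ), τ - a = τ - b → a = b := by
        intro a ha b hb hab
        simp only [Finset.mem_filter] at ha hb
        omega
      rw [hsplit, ← Finset.sum_image hinj]
      apply Finset.sum_le_sum_of_subset_of_nonneg
      · intro σ hσ
        simp only [Finset.mem_image, Finset.mem_filter] at hσ
        obtain ⟨j, hj, rfl⟩ := hσ
        exact Finset.mem_range.2 (by omega)
      · exact fun σ _ _ => hqnn σ
    -- pointwise bound: q τ ≤ S τ / h + C (h - 1)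
    have hkey : ∀ τ, q τ ≤ S τ / h + C * ((h:ℝ) - 1) := by
      intro τ
      have hsum : q τ * (h:ℝ) ≤ S τ + (h:ℝ) * (C * ((h:ℝ) - 1)) := by
        have hterm : ∀ j ∈ Finset.range h, q τ ≤ q (τ - j) + C * ((h:ℝ) - 1) := by
          intro j hj
          have hjh : (j:ℝ) ≤ (h:ℝ) - 1 := by
            have := Finset.mem_range.1 hj
            have : (j:ℝ) + 1 ≤ (h:ℝ) := by exact_mod_cast this
            linarith
          have := hA τ j
          nlinarith [hC.le]
        have := Finset.sum_le_sum hterm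
        simp only [Finset.sum_const, Finset.card_range, nsmul_eq_mul, Finset.sum_add_distrib] at this
        rw [hSdef]
        nlinarith [this]
      have := (le_div_iff₀ hhpos).2 hsum
      calc q τ ≤ (S τ + (h:ℝ) * (C * ((h:ℝ) - 1))) / h := this
        _ = S τ / h + C * ((h:ℝ) - 1) := by field_simp
    -- sum it up
    have main : ∑ τ ∈ Finset.range t, q τ * x τ ≤
        (1/(h:ℝ)) * (∑ σ ∈ Finset.range t, q σ) * e + C * ((h:ℝ) - 1) * e := by
      have step1 : ∑ τ ∈ Finset.range t, q τ * x τ ≤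
          ∑ τ ∈ Finset.range t, ((1/(h:ℝ)) * (∑ σ ∈ Finset.range t, q σ) + C * ((h:ℝ) - 1)) * x τ := by
        apply Finset.sum_le_sum
        intro τ hτ
        apply mul_le_mul_of_nonneg_right _ (hxnn τ)
        have h1 := hkey τ
        have h2 := hB τ hτ
        have h3 : S τ / h ≤ (1/(h:ℝ)) * (∑ σ ∈ Finset.range t, q σ) := by
          rw [div_eq_mul_inv, one_div]
          rw [mul_comm]
          exact mul_le_mul_of_nonneg_left h2 (by positivity)
        linarith
      calc ∑ τ ∈ Finset.range t, q τ * x τ ≤ _ := step1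
        _ = ((1/(h:ℝ)) * (∑ σ ∈ Finset.range t, q σ) + C * ((h:ℝ) - 1)) * e := by
          rw [← Finset.mul_sum]
        _ = (1/(h:ℝ)) * (∑ σ ∈ Finset.range t, q σ) * e + C * ((h:ℝ) - 1) * e := by ring
    have bound1 : (1/(h:ℝ)) * (∑ σ ∈ Finset.range t, q σ) * e ≤
        (1/z) * (∑ σ ∈ Finset.range t, q σ) := by
      have hfrac : e / (h:ℝ) ≤ 1 / z := by
        rw [div_le_div_iff₀ hhpos hz]
        nlinarith
      have : (1/(h:ℝ)) * (∑ σ ∈ Finset.range t, q σ) * e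
          = (e / (h:ℝ)) * (∑ σ ∈ Finset.range t, q σ) := by ring
      rw [this]
      exact mul_le_mul_of_nonneg_right hfrac hqsum
    have bound2 : C * ((h:ℝ) - 1) * e ≤ C * z * e ^ 2 := by
      have key : 0 ≤ C * e * (z * e - ((h:ℝ) - 1)) :=
        mul_nonneg (mul_nonneg hC.le henn) (by linarith)
      nlinarith [key]
    have hCe : 0 ≤ C * e := mul_nonneg hC.le henn
    linarith
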